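/- arXiv:1703.01077 — 5 statements merged into one kernel-verified Lean document; each statement's English description precedes it below -/
import Mathlib

section
/- L is the unique metric normalized ℝ-mold: if (μ_i) is an ℝ-mold with μ₁ = 1 that is metric, then μ_i = log₂(i+1) for all i ∈ ℕ. -/
/-!
The metric identity says that `n ↦ μ (n - 1)` is completely additive on the positive integers,
so `μ (n ^ k - 1) = k μ (n - 1)`, and the mold is monotone. Squeezing `n ^ k` between consecutive
powers `2 ^ m ≤ n ^ k < 2 ^ (m + 1)` puts both `k μ (n - 1)` and `k log₂ n` in `[m, m + 1]`;
letting `k → ∞` gives `μ (n - 1) = log₂ n`.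
-/

/-- An `ℝ`-mold: a strictly increasing sequence of nonnegative reals starting at `0`,
whose consecutive differences become arbitrarily small, closed under addition. -/
def IsRMold (μ : ℕ → ℝ) : Prop :=
  StrictMono μ ∧ (∀ i, 0 ≤ μ i) ∧ μ 0 = 0 ∧
    (∀ ε : ℝ, 0 < ε → ∃ n₀ : ℕ, ∀ n ≥ n₀, μ (n + 1) - μ n < ε) ∧
    (∀ i j : ℕ, ∃ k : ℕ, μ k = μ i + μ j)

/-- A mold is metric if `μ_{ab-1} = μ_{a-1} + μ_{b-1}` for all positive integers `a, b`. -/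
def IsMetric (μ : ℕ → ℝ) : Prop :=
  ∀ a b : ℕ, 0 < a → 0 < b → μ (a * b - 1) = μ (a - 1) + μ (b - 1)

theorem eq_of_forall_nsmul_abs_sub_le {α : Type*} [AddCommGroup α] [LinearOrder α]
    [IsOrderedAddMonoid α] [Archimedean α] {x y c : α} (h : ∀ k : ℕ, k • |x - y| ≤ c) :
    x = y := by
  by_contra hxy
  have hpos : 0 < |x - y| := abs_pos.mpr (sub_ne_zero.mpr hxy)
  obtain ⟨k, hk⟩ := Archimedean.arch c hpos
  have hk' := h (k + 1)
  rw [succ_nsmul] at hk'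
  exact (hk.trans_lt (lt_add_of_pos_right _ hpos)).not_ge hk'

theorem eq_logb_of_monotone_of_map_pow {g : ℕ → ℝ} (hg : Monotone g)
    (hpow : ∀ n k : ℕ, 0 < n → g (n ^ k) = k * g n) {b : ℕ} (hb : 1 < b) (hgb : g b = 1)
    {n : ℕ} (hn : 0 < n) : g n = Real.logb b n := by
  have hb0 : 0 < b := by omega
  have hbR : (1 : ℝ) < b := by exact_mod_cast hb
  refine eq_of_forall_nsmul_abs_sub_le (c := 1) fun k => ?_
  set m := Nat.log b (n ^ k)
  have hlow : b ^ m ≤ n ^ k := Nat.pow_log_le_self b (pow_pos hn k).ne'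
  have hupp : n ^ k < b ^ (m + 1) := Nat.lt_pow_succ_log_self hb _
  have hg_low : (m : ℝ) ≤ k * g n := by
    simpa [hpow _ _ hb0, hpow _ _ hn, hgb] using hg hlow
  have hg_upp : k * g n ≤ m + 1 := by
    simpa [hpow _ _ hb0, hpow _ _ hn, hgb] using hg hupp.le
  have hlog_low : (m : ℝ) ≤ k * Real.logb b n := by
    have := Real.logb_le_logb_of_le hbR (by positivity)
      (show (b : ℝ) ^ m ≤ (n : ℝ) ^ k by exact_mod_cast hlow)
    simpa [Real.logb_pow, Real.logb_self_eq_one hbR] using this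
  have hlog_upp : k * Real.logb b n ≤ m + 1 := by
    have := Real.logb_le_logb_of_le hbR (by positivity)
      (show (n : ℝ) ^ k ≤ (b : ℝ) ^ (m + 1) by exact_mod_cast hupp.le)
    simpa [Real.logb_pow, Real.logb_self_eq_one hbR] using this
  rw [nsmul_eq_mul, ← Nat.abs_cast (R := ℝ) k, ← abs_mul, mul_sub, abs_sub_le_iff]
  constructor <;> linarith

namespace IsMetric

theorem map_zero {μ : ℕ → ℝ} (hμ : IsMetric μ) : μ 0 = 0 := by
  simpa using hμ 1 1 one_pos one_pos

theorem map_pow_sub_one {μ : ℕ → ℝ} (hμ : IsMetric μ) {a : ℕ} (ha : 0 < a) (k : ℕ) :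
    μ (a ^ k - 1) = k * μ (a - 1) := by
  induction k with
  | zero => simp [hμ.map_zero]
  | succ k ih =>
    rw [pow_succ, hμ _ _ (pow_pos ha k) ha, ih]
    push_cast
    ring

end IsMetric

/-- `L` is the unique metric normalized ℝ-mold. -/
theorem metric_normalized_mold_unique (μ : ℕ → ℝ)
    (hmold : IsRMold μ) (hnorm : μ 1 = 1) (hmetric : IsMetric μ) :
    ∀ i : ℕ, μ i = Real.logb 2 (i + 1) := by
  intro i
  have hmono : Monotone fun n => μ (n - 1) :=
    hmold.1.monotone.comp fun _ _ h => Nat.sub_le_sub_right h 1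
  have := eq_logb_of_monotone_of_map_pow hmono (fun n k hn => hmetric.map_pow_sub_one hn k)
    one_lt_two (by simpa using hnorm) i.succ_pos
  simpa using this
end

section
/- If M is a fractal normalized ℝ-mold of granularity l, then the cardinality of the i-th period of M is l^i, for every i ∈ ℕ. -/
/-- The `i`-th period of a (normalized) mold `μ`: elements `x` of the mold with `i ≤ x < i + 1`. -/
def period (μ : ℕ → ℝ) (i : ℕ) : Set ℝ :=
  {x | (∃ k, μ k = x) ∧ (i : ℝ) ≤ x ∧ x < (i : ℝ) + 1}

/-- A normalized mold is fractal if its periods can be enumerated as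
`π_i = {i + τ^{(i)}_0, …, i + τ^{(i)}_{l_i - 1}}` with
`0 = τ^{(i)}_0 < ⋯ < τ^{(i)}_{l_i - 1} < τ^{(i)}_{l_i} = 1`, and each period is obtained by
dividing each interval of the previous one in the same proportions as the first period divides
`[0, 1]`:
`π_{i+1} = ⋃_{r < l_i} ⋃_{s < l} {(i+1) + τ^{(i)}_r + τ^{(1)}_s (τ^{(i)}_{r+1} - τ^{(i)}_r)}`. -/
def IsFractal (μ : ℕ → ℝ) : Prop :=
  ∃ (l : ℕ → ℕ) (τ : ℕ → ℕ → ℝ),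
    (∀ i, 0 < l i) ∧
    (∀ i, τ i 0 = 0) ∧
    (∀ i, τ i (l i) = 1) ∧
    (∀ i, ∀ r s : ℕ, r < s → s ≤ l i → τ i r < τ i s) ∧
    (∀ i, period μ i = {x | ∃ r < l i, x = (i : ℝ) + τ i r}) ∧
    (∀ i, period μ (i + 1) =
      {x | ∃ r < l i, ∃ s < l 1, x = ((i : ℝ) + 1) + τ i r + τ 1 s * (τ i (r + 1) - τ i r)})

/-- the cardinality of the `i`-th period of a fractal normalized mold of
granularity `l` is `l ^ i`. -/
theorem fractal_period_card (μ : ℕ → ℝ) (l : ℕ)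
    (hmold : IsRMold μ) (hnorm : μ 1 = 1) (hfr : IsFractal μ)
    (hgran : (period μ 1).ncard = l) :
    ∀ i : ℕ, (period μ i).ncard = l ^ i := by
  obtain ⟨lf, τ, hlpos, hτ0, hτl, hτmono, hper, hper'⟩ := hfr
  -- cardinality of period i is lf i
  have key : ∀ i, (period μ i).ncard = lf i := by
    intro i
    rw [hper i]
    have hset : {x | ∃ r < lf i, x = (i : ℝ) + τ i r}
        = (fun r => (i : ℝ) + τ i r) '' Set.Iio (lf i) := by
      ext x
      simp only [Set.mem_setOf_eq, Set.mem_image, Set.mem_Iio]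
      constructor
      · rintro ⟨r, hr, rfl⟩; exact ⟨r, hr, rfl⟩
      · rintro ⟨r, hr, rfl⟩; exact ⟨r, hr, rfl⟩
    rw [hset, Set.ncard_image_of_injOn, ← Finset.coe_range,
      Set.ncard_coe_finset, Finset.card_range]
    intro a ha b hb hab
    simp only [Set.mem_Iio] at ha hb
    have hab' : τ i a = τ i b := by linarith [add_left_cancel hab]
    by_contra hne
    rcases lt_or_gt_of_ne hne with h | h
    · exact absurd hab' (ne_of_lt (hτmono i a b h hb.le))
    · exact absurd hab'.symm (ne_of_lt (hτmono i b a h ha.le))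
  -- period 0 = {0}
  have hper0 : period μ 0 = {(0 : ℝ)} := by
    ext x
    simp only [period, Set.mem_setOf_eq, Set.mem_singleton_iff, Nat.cast_zero, zero_add]
    constructor
    · rintro ⟨⟨k, rfl⟩, h0, h1⟩
      rcases Nat.eq_zero_or_pos k with rfl | hk
      · exact hmold.2.2.1
      · have := hmold.1.monotone hk
        rw [hnorm] at this
        linarith
    · rintro rfl
      exact ⟨⟨0, hmold.2.2.1⟩, le_refl _, by norm_num⟩
  -- step: card of period (i+1) = lf i * lf 1
  have hstep : ∀ i, (period μ (i + 1)).ncard = lf i * lf 1 := by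
    intro i
    rw [hper' i]
    set g : ℕ × ℕ → ℝ :=
      fun p => ((i : ℝ) + 1) + τ i p.1 + τ 1 p.2 * (τ i (p.1 + 1) - τ i p.1) with hg
    have hset : {x | ∃ r < lf i, ∃ s < lf 1,
        x = ((i : ℝ) + 1) + τ i r + τ 1 s * (τ i (r + 1) - τ i r)}
        = g '' (Set.Iio (lf i) ×ˢ Set.Iio (lf 1)) := by
      ext x
      simp only [Set.mem_setOf_eq, Set.mem_image, Set.mem_prod, Set.mem_Iio, hg, Prod.exists]
      constructor
      · rintro ⟨r, hr, s, hs, rfl⟩; exact ⟨r, s, ⟨hr, hs⟩, rfl⟩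
      · rintro ⟨r, s, ⟨hr, hs⟩, rfl⟩; exact ⟨r, hr, s, hs, rfl⟩
    -- basic bounds
    have hτ1lo : ∀ s, s < lf 1 → 0 ≤ τ 1 s := by
      intro s hs
      rcases Nat.eq_zero_or_pos s with rfl | hsp
      · rw [hτ0]
      · have := hτmono 1 0 s hsp hs.le
        rw [hτ0] at this; linarith
    have hτ1hi : ∀ s, s < lf 1 → τ 1 s < 1 := by
      intro s hs
      have := hτmono 1 s (lf 1) hs le_rfl
      rwa [hτl] at this
    have hd : ∀ r, r < lf i → 0 < τ i (r + 1) - τ i r := by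
      intro r hr
      have := hτmono i r (r + 1) (Nat.lt_succ_self r) hr
      linarith
    have hlb : ∀ r s, r < lf i → s < lf 1 → (i : ℝ) + 1 + τ i r ≤ g (r, s) := by
      intro r s hr hs
      have := mul_nonneg (hτ1lo s hs) (hd r hr).le
      simp only [hg]; linarith
    have hub : ∀ r s, r < lf i → s < lf 1 → g (r, s) < (i : ℝ) + 1 + τ i (r + 1) := by
      intro r s hr hs
      have h1 : τ 1 s * (τ i (r + 1) - τ i r) < 1 * (τ i (r + 1) - τ i r) :=
        mul_lt_mul_of_pos_right (hτ1hi s hs) (hd r hr)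
      simp only [hg]; linarith
    have hinj : Set.InjOn g (Set.Iio (lf i) ×ˢ Set.Iio (lf 1)) := by
      rintro ⟨r, s⟩ hrs ⟨r', s'⟩ hrs' heq
      simp only [Set.mem_prod, Set.mem_Iio] at hrs hrs'
      obtain ⟨hr, hs⟩ := hrs
      obtain ⟨hr', hs'⟩ := hrs'
      have hrr : r = r' := by
        by_contra hne
        rcases lt_or_gt_of_ne hne with h | h
        · have h1 := hub r s hr hs
          have h2 := hlb r' s' hr' hs'
          have h3 : τ i (r + 1) ≤ τ i r' := by
            rcases eq_or_lt_of_le (Nat.succ_le_of_lt h) with he | hlt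
            · rw [Nat.succ_eq_add_one] at he; rw [he]
            · exact (hτmono i (r + 1) r' hlt hr'.le).le
          rw [heq] at h1; linarith
        · have h1 := hub r' s' hr' hs'
          have h2 := hlb r s hr hs
          have h3 : τ i (r' + 1) ≤ τ i r := by
            rcases eq_or_lt_of_le (Nat.succ_le_of_lt h) with he | hlt
            · rw [Nat.succ_eq_add_one] at he; rw [he]
            · exact (hτmono i (r' + 1) r hlt hr.le).le
          rw [heq] at h2; linarith
      subst hrr
      have hss : τ 1 s = τ 1 s' := by
        simp only [hg] at heq
        have hd' := hd r hr
        have : τ 1 s * (τ i (r + 1) - τ i r) = τ 1 s' * (τ i (r + 1) - τ i r) := by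
          linarith
        exact mul_right_cancel₀ (ne_of_gt hd') this
      have : s = s' := by
        by_contra hne
        rcases lt_or_gt_of_ne hne with h | h
        · exact absurd hss (ne_of_lt (hτmono 1 s s' h hs'.le))
        · exact absurd hss.symm (ne_of_lt (hτmono 1 s' s h hs.le))
      rw [this]
    rw [hset, Set.ncard_image_of_injOn hinj]
    have : (Set.Iio (lf i) ×ˢ Set.Iio (lf 1) : Set (ℕ × ℕ))
        = ((Finset.range (lf i) ×ˢ Finset.range (lf 1) : Finset (ℕ × ℕ)) : Set (ℕ × ℕ)) := by
      rw [Finset.coe_product, Finset.coe_range, Finset.coe_range]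
    rw [this, Set.ncard_coe_finset, Finset.card_product, Finset.card_range, Finset.card_range]
  have hl1 : lf 1 = l := by rw [← key 1, hgran]
  intro i
  induction i with
  | zero => rw [hper0]; simp
  | succ i ih =>
    rw [hstep i, hl1, ← key i, ih, pow_succ]
end

section
/- For every integer l ≥ 2, the set P_l = {0} ∪ {i + k/l^i : i a positive integer, 0 ≤ k < l^i} — that is, the sequence whose i-th period is {i, i + 1/l^i, i + 2/l^i, …, i + (l^i−1)/l^i} — when enumerated in increasing order is a normalized ℝ-mold of granularity l, and it is fractal with first period {1, 1+1/l, …, 1+(l−1)/l}. In particular P_l is closed under addition. -/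
/-- The set `P_l = {0} ∪ {i + k / l^i : i ≥ 1, 0 ≤ k < l^i}`. -/
def Pset (l : ℕ) : Set ℝ :=
  {0} ∪ {x : ℝ | ∃ i : ℕ, 0 < i ∧ ∃ k : ℕ, k < l ^ i ∧ x = (i : ℝ) + (k : ℝ) / (l : ℝ) ^ i}

/-! The point `i + k / l ^ i` of `P_l` is recorded by its position `(i, k)`. Listing positions
lexicographically enumerates `P_l` increasingly, with step `1 / l ^ i` inside the `i`-th period;
these steps tend to `0`. Closure under addition comes from writing `x + y` with the common
denominator `l ^ j` of the larger period `j` and carrying a possible overflow into the integer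
part. The `(i + 1)`-st period is the `i`-th one with each gap cut into `l` equal pieces, which is
the fractal property with `τ^{(i)}_r = r / l ^ i`. -/

namespace PerfectFractalMold

variable {l : ℕ}

lemma div_pow_lt_one {i k : ℕ} (hk : k < l ^ i) : (k : ℝ) / (l : ℝ) ^ i < 1 := by
  have hpos : (0 : ℝ) < (l : ℝ) ^ i := by exact_mod_cast Nat.zero_lt_of_lt hk
  rw [div_lt_one hpos]
  exact_mod_cast hk

lemma floor_add_div_pow {i k : ℕ} (hk : k < l ^ i) : ⌊(i : ℝ) + (k : ℝ) / (l : ℝ) ^ i⌋₊ = i := by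
  rw [Nat.floor_eq_iff (by positivity)]
  constructor
  · linarith [show (0 : ℝ) ≤ (k : ℝ) / (l : ℝ) ^ i by positivity]
  · linarith [div_pow_lt_one hk]

lemma Pset_eq :
    Pset l = {x | ∃ i k : ℕ, k < l ^ i ∧ x = (i : ℝ) + (k : ℝ) / (l : ℝ) ^ i} := by
  ext x
  constructor
  · rintro (rfl | ⟨i, -, k, hk, rfl⟩)
    · exact ⟨0, 0, by simp, by simp⟩
    · exact ⟨i, k, hk, rfl⟩
  · rintro ⟨i, k, hk, rfl⟩
    rcases Nat.eq_zero_or_pos i with rfl | hi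
    · obtain rfl : k = 0 := by simpa using hk
      left
      simp
    · exact Or.inr ⟨i, hi, k, hk, rfl⟩

lemma add_div_pow_mem_Pset (hl : 0 < l) {i n k : ℕ} (hn : n ≤ i) (hk : k < l ^ n) :
    (i : ℝ) + (k : ℝ) / (l : ℝ) ^ n ∈ Pset l := by
  obtain ⟨d, rfl⟩ := Nat.exists_eq_add_of_le hn
  rw [Pset_eq]
  refine ⟨n + d, k * l ^ d, ?_, ?_⟩
  · rw [pow_add]
    exact Nat.mul_lt_mul_of_pos_right hk (pow_pos hl d)
  · have : (l : ℝ) ≠ 0 := by exact_mod_cast hl.ne'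
    push_cast
    field_simp
    ring

lemma add_div_pow_mem_Pset_of_lt_two_mul (hl : 0 < l) {i n c : ℕ} (hn : n ≤ i)
    (hc : c < 2 * l ^ n) : (i : ℝ) + (c : ℝ) / (l : ℝ) ^ n ∈ Pset l := by
  rcases lt_or_ge c (l ^ n) with hlt | hge
  · exact add_div_pow_mem_Pset hl hn hlt
  · have hcarry : (i : ℝ) + (c : ℝ) / (l : ℝ) ^ n
        = ((i + 1 : ℕ) : ℝ) + ((c - l ^ n : ℕ) : ℝ) / (l : ℝ) ^ n := by
      have : (0 : ℝ) < (l : ℝ) ^ n := by exact_mod_cast pow_pos hl n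
      rw [Nat.cast_sub hge]
      push_cast
      field_simp
      ring
    rw [hcarry]
    exact add_div_pow_mem_Pset hl (by omega) (by omega)

lemma add_mem_Pset (hl : 0 < l) {x y : ℝ} (hx : x ∈ Pset l) (hy : y ∈ Pset l) :
    x + y ∈ Pset l := by
  rw [Pset_eq] at hx hy
  obtain ⟨i, k, hk, rfl⟩ := hx
  obtain ⟨j, m, hm, rfl⟩ := hy
  wlog hij : i ≤ j generalizing i j k m
  · rw [add_comm]
    exact this j m hm i k hk (by omega)
  obtain ⟨d, rfl⟩ := Nat.exists_eq_add_of_le hij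
  have hsum :
      (i : ℝ) + (k : ℝ) / (l : ℝ) ^ i + (((i + d : ℕ) : ℝ) + (m : ℝ) / (l : ℝ) ^ (i + d))
      = ((i + (i + d) : ℕ) : ℝ) + ((k * l ^ d + m : ℕ) : ℝ) / (l : ℝ) ^ (i + d) := by
    have : (l : ℝ) ≠ 0 := by exact_mod_cast hl.ne'
    push_cast
    field_simp
    ring
  have hnum : k * l ^ d + m < 2 * l ^ (i + d) := by
    have : k * l ^ d < l ^ (i + d) := by
      rw [pow_add]
      exact Nat.mul_lt_mul_of_pos_right hk (pow_pos hl d)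
    omega
  rw [hsum]
  exact add_div_pow_mem_Pset_of_lt_two_mul hl (by omega) hnum

def nextPos (l : ℕ) (p : ℕ × ℕ) : ℕ × ℕ :=
  if p.2 + 1 < l ^ p.1 then (p.1, p.2 + 1) else (p.1 + 1, 0)

def pos (l : ℕ) : ℕ → ℕ × ℕ
  | 0 => (0, 0)
  | n + 1 => nextPos l (pos l n)

noncomputable def enum (l : ℕ) (n : ℕ) : ℝ :=
  ((pos l n).1 : ℝ) + ((pos l n).2 : ℝ) / (l : ℝ) ^ (pos l n).1

lemma pos_snd_lt (hl : 0 < l) (n : ℕ) : (pos l n).2 < l ^ (pos l n).1 := by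
  induction n with
  | zero => simp [pos]
  | succ n ih =>
    simp only [pos, nextPos]
    split_ifs with h
    · exact h
    · exact pow_pos hl _

lemma monotone_pos_fst : Monotone fun n => (pos l n).1 := by
  refine monotone_nat_of_le_succ fun n => ?_
  simp only [pos, nextPos]
  split_ifs <;> simp

lemma exists_pos_eq (hl : 0 < l) {i k : ℕ} (hk : k < l ^ i) : ∃ n, pos l n = (i, k) := by
  induction i generalizing k with
  | zero => exact ⟨0, by simp_all [pos]⟩
  | succ i ih =>
    induction k with
    | zero =>
      obtain ⟨n, hn⟩ := ih (Nat.sub_one_lt (pow_pos hl i).ne')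
      refine ⟨n + 1, ?_⟩
      simp only [pos, nextPos, hn]
      rw [if_neg (by have := pow_pos hl i; omega)]
    | succ k ihk =>
      obtain ⟨n, hn⟩ := ihk (by omega)
      exact ⟨n + 1, by simp only [pos, nextPos, hn, if_pos hk]⟩

lemma enum_succ (hl : 0 < l) (n : ℕ) :
    enum l (n + 1) = enum l n + 1 / (l : ℝ) ^ (pos l n).1 := by
  have hpow : (0 : ℝ) < (l : ℝ) ^ (pos l n).1 := by exact_mod_cast pow_pos hl _
  simp only [enum, pos, nextPos]
  split_ifs with h
  · push_cast
    field_simp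
    ring
  · have hlast : ((pos l n).2 : ℝ) + 1 = (l : ℝ) ^ (pos l n).1 := by
      exact_mod_cast (show (pos l n).2 + 1 = l ^ (pos l n).1 by
        have := pos_snd_lt hl n; omega)
    push_cast
    field_simp
    linear_combination (-(l : ℝ) ^ ((pos l n).1 + 1)) * hlast

lemma strictMono_enum (hl : 0 < l) : StrictMono (enum l) :=
  strictMono_nat_of_lt_succ fun n => by
    rw [enum_succ hl n]
    have : (0 : ℝ) < 1 / (l : ℝ) ^ (pos l n).1 := by
      have : (0 : ℝ) < (l : ℝ) := by exact_mod_cast hl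
      positivity
    linarith

lemma range_enum (hl : 0 < l) : Set.range (enum l) = Pset l := by
  rw [Pset_eq]
  ext x
  constructor
  · rintro ⟨n, rfl⟩
    exact ⟨_, _, pos_snd_lt hl n, rfl⟩
  · rintro ⟨i, k, hk, rfl⟩
    obtain ⟨n, hn⟩ := exists_pos_eq hl hk
    exact ⟨n, by simp [enum, hn]⟩

lemma enum_succ_sub_lt (hl : 1 < l) {ε : ℝ} (hε : 0 < ε) :
    ∃ n₀, ∀ n ≥ n₀, enum l (n + 1) - enum l n < ε := by
  have hl₀ : 0 < l := by omega
  obtain ⟨i, hi⟩ := pow_unbounded_of_one_lt (1 / ε) (by exact_mod_cast hl : (1 : ℝ) < l)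
  obtain ⟨n₀, hn₀⟩ := exists_pos_eq hl₀ (pow_pos hl₀ i)
  refine ⟨n₀, fun n hn => ?_⟩
  have hin : i ≤ (pos l n).1 := by simpa [hn₀] using monotone_pos_fst (l := l) hn
  have hpow : (0 : ℝ) < (l : ℝ) ^ i := by exact_mod_cast pow_pos hl₀ i
  rw [enum_succ hl₀, add_sub_cancel_left]
  calc 1 / (l : ℝ) ^ (pos l n).1
      ≤ 1 / (l : ℝ) ^ i :=
        one_div_le_one_div_of_le hpow (pow_le_pow_right₀ (by exact_mod_cast hl.le) hin)
    _ < ε := by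
        rw [div_lt_iff₀ hpow]
        rw [div_lt_iff₀ hε] at hi
        linarith

lemma isRMold_enum (hl : 1 < l) : IsRMold (enum l) := by
  have hl₀ : 0 < l := by omega
  refine ⟨strictMono_enum hl₀, fun n => by unfold enum; positivity, by simp [enum, pos],
    fun ε hε => enum_succ_sub_lt hl hε, fun i j => ?_⟩
  have hsum := add_mem_Pset hl₀ (x := enum l i) (y := enum l j)
  rw [← range_enum hl₀] at hsum
  exact hsum ⟨i, rfl⟩ ⟨j, rfl⟩

lemma period_enum (hl : 0 < l) (i : ℕ) :
    period (enum l) i = {x | ∃ k < l ^ i, x = (i : ℝ) + (k : ℝ) / (l : ℝ) ^ i} := by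
  ext x
  have hmem : (∃ n, enum l n = x) ↔ x ∈ Pset l := by rw [← range_enum hl]; rfl
  simp only [period, Set.mem_ofPred_eq, hmem, Pset_eq]
  constructor
  · rintro ⟨⟨j, k, hk, rfl⟩, hix, hxi⟩
    obtain rfl : j = i := by
      rw [← floor_add_div_pow hk, Nat.floor_eq_iff (by positivity)]
      exact ⟨hix, hxi⟩
    exact ⟨k, hk, rfl⟩
  · rintro ⟨k, hk, rfl⟩
    have hfloor := floor_add_div_pow hk
    rw [Nat.floor_eq_iff (by positivity)] at hfloor
    exact ⟨⟨i, k, hk, rfl⟩, hfloor⟩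

lemma ncard_period_enum (hl : 0 < l) (i : ℕ) : (period (enum l) i).ncard = l ^ i := by
  have hinj : Function.Injective fun k : ℕ => (i : ℝ) + (k : ℝ) / (l : ℝ) ^ i := by
    have : (l : ℝ) ^ i ≠ 0 := by exact_mod_cast (pow_pos hl i).ne'
    intro a b hab
    simpa [this] using hab
  have hset : period (enum l) i
      = (fun k : ℕ => (i : ℝ) + (k : ℝ) / (l : ℝ) ^ i) '' ↑(Finset.range (l ^ i)) := by
    rw [period_enum hl]
    ext x
    simp [eq_comm]
  rw [hset, Set.ncard_image_of_injective _ hinj, Set.ncard_coe_finset, Finset.card_range]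

lemma exists_lt_mul_iff {a b : ℕ} (hb : 0 < b) (p : ℕ → Prop) :
    (∃ k < a * b, p k) ↔ ∃ r < a, ∃ s < b, p (r * b + s) := by
  constructor
  · rintro ⟨k, hk, hp⟩
    refine ⟨k / b, Nat.div_lt_of_lt_mul (Nat.mul_comm a b ▸ hk), k % b, Nat.mod_lt k hb, ?_⟩
    rwa [Nat.mul_comm, Nat.div_add_mod]
  · rintro ⟨r, hr, s, hs, hp⟩
    refine ⟨r * b + s, ?_, hp⟩
    calc r * b + s < (r + 1) * b := by rw [add_mul, one_mul]; omega
      _ ≤ a * b := Nat.mul_le_mul_right b hr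

lemma isFractal_enum (hl : 0 < l) : IsFractal (enum l) := by
  have hpow (i : ℕ) : (0 : ℝ) < (l : ℝ) ^ i := by exact_mod_cast pow_pos hl i
  refine ⟨fun i => l ^ i, fun i r => (r : ℝ) / (l : ℝ) ^ i, fun i => pow_pos hl i,
    fun i => by simp, fun i => by simp [(hpow i).ne'], fun i r s hrs _ => ?_,
    period_enum hl, fun i => ?_⟩
  · exact div_lt_div_of_pos_right (by exact_mod_cast hrs) (hpow i)
  · ext x
    simp only [period_enum hl, Set.mem_ofPred_eq, pow_one]
    rw [pow_succ l i, exists_lt_mul_iff hl]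
    refine exists_congr fun r => and_congr_right fun _ =>
      exists_congr fun s => and_congr_right fun _ => ?_
    have : (l : ℝ) ≠ 0 := by exact_mod_cast hl.ne'
    rw [iff_eq_eq]
    congr 1
    push_cast
    field_simp
    ring

end PerfectFractalMold

open PerfectFractalMold in
/-- for every integer `l ≥ 2`, `P_l`, enumerated in increasing order, is a
normalized ℝ-mold of granularity `l`, fractal, with first period `{1, 1 + 1/l, …, 1 + (l-1)/l}`;
in particular `P_l` is closed under addition. -/
theorem perfect_fractal_mold (l : ℕ) (hl : 2 ≤ l) :
    (∃ μ : ℕ → ℝ, Set.range μ = Pset l ∧ IsRMold μ ∧ μ 1 = 1 ∧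
      (period μ 1).ncard = l ∧
      period μ 1 = {x : ℝ | ∃ k : ℕ, k < l ∧ x = 1 + (k : ℝ) / (l : ℝ)} ∧
      IsFractal μ) ∧
    (∀ x ∈ Pset l, ∀ y ∈ Pset l, x + y ∈ Pset l) := by
  have hl₀ : 0 < l := by omega
  refine ⟨⟨enum l, range_enum hl₀, isRMold_enum hl, ?_, ?_, ?_, isFractal_enum hl₀⟩,
    fun x hx y hy => add_mem_Pset hl₀ hx hy⟩
  · simp [enum, pos, nextPos]
  · simpa using ncard_period_enum hl₀ 1
  · simpa using period_enum hl₀ 1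
end

section
/- The mold L given by λ_i = log₂(i+1) is not fractal. In particular, the fractality condition fails already between the second and third periods: (λ₂ − λ₁)/(λ₃ − λ₁) ≠ (λ₄ − λ₃)/(λ₅ − λ₃), i.e. (log₂(3/2))² ≠ log₂(5/4). -/
/-- The sequence `λ_i = log₂ (i + 1)`. -/
noncomputable def Lseq : ℕ → ℝ := fun i => Real.logb 2 (i + 1)

/-!
The first period of `L` is `{1, 1 + c}` with `c = log₂ (3/2)`, so a fractal enumeration cuts
`[0, 1]` at `c` alone and the second period is forced to be `{2, 2 + c², 2 + c, 2 + 2c - c²}`.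
But `λ₄ = log₂ 5 = 2 + d` with `d = log₂ (5/4)` lies in the second period, while
`0 < d < c² < c`. The ratios in the second claim are `c` and `d / c`, so it is `c² ≠ d` again.
-/

open Real Set

lemma Lseq_eq_add_logb (i k : ℕ) : Lseq k = i + logb 2 ((k + 1) / 2 ^ i) := by
  rw [Lseq, logb_div (by positivity) (by positivity), logb_pow,
    logb_self_eq_one one_lt_two]
  ring

lemma Lseq_mem_period_iff (k i : ℕ) :
    Lseq k ∈ period Lseq i ↔ 2 ^ i ≤ k + 1 ∧ k + 1 < 2 ^ (i + 1) := by
  have hk : (0 : ℝ) < k + 1 := by positivity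
  simp only [period, mem_ofPred_eq, exists_apply_eq_apply, true_and, Lseq]
  rw [le_logb_iff_rpow_le one_lt_two hk, logb_lt_iff_lt_rpow one_lt_two hk,
    ← Nat.cast_succ, ← Nat.cast_succ, rpow_natCast, rpow_natCast]
  exact_mod_cast Iff.rfl

lemma Lseq_period_one : period Lseq 1 = {1, 1 + logb 2 (3 / 2)} := by
  have h1 : Lseq 1 = 1 := by norm_num [Lseq_eq_add_logb 1]
  have h2 : Lseq 2 = 1 + logb 2 (3 / 2) := by norm_num [Lseq_eq_add_logb 1]
  ext x
  constructor
  · intro hx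
    obtain ⟨k, rfl⟩ := hx.1
    obtain ⟨hk₁, hk₂⟩ := (Lseq_mem_period_iff k 1).1 hx
    obtain rfl | rfl : k = 1 ∨ k = 2 := by omega
    exacts [Or.inl h1, Or.inr h2]
  · rintro (rfl | rfl)
    · exact h1 ▸ (Lseq_mem_period_iff 1 1).2 (by norm_num)
    · exact h2 ▸ (Lseq_mem_period_iff 2 1).2 (by norm_num)

lemma logb_five_fourths_lt_sq : logb 2 (5 / 4) < logb 2 (3 / 2) ^ 2 := by
  have hc : 7 / 12 < logb 2 (3 / 2) := by
    have h := logb_lt_logb one_lt_two (by positivity) (by norm_num : (2 : ℝ) ^ 7 < (3 / 2) ^ 12)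
    rw [logb_pow, logb_pow, logb_self_eq_one one_lt_two] at h
    linarith
  have hd : logb 2 (5 / 4) < 1 / 3 := by
    have h := logb_lt_logb one_lt_two (by positivity) (by norm_num : (5 / 4 : ℝ) ^ 3 < 2)
    rw [logb_pow, logb_self_eq_one one_lt_two] at h
    linarith
  nlinarith

lemma eq_pair_of_strictMonoOn_image_eq {α : Type*} [Preorder α] {n : ℕ} {τ : ℕ → α}
    {a b : α} (hτ : StrictMonoOn τ (Iio n)) (h : τ '' Iio n = {a, b}) (hab : a < b) :
    n = 2 ∧ τ 0 = a ∧ τ 1 = b := by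
  have hn : n = 2 := by
    rw [← ncard_Iio_nat n, ← hτ.injOn.ncard_image, h, ncard_pair hab.ne]
  subst hn
  have hval (r : ℕ) (hr : r < 2) : τ r = a ∨ τ r = b := by
    have : τ r ∈ ({a, b} : Set α) := h ▸ mem_image_of_mem τ hr
    simpa using this
  have h01 : τ 0 < τ 1 := hτ (by simp) (by simp) zero_lt_one
  refine ⟨rfl, ?_⟩
  rcases hval 0 two_pos with h0 | h0 <;> rcases hval 1 one_lt_two with h1 | h1 <;>
    rw [h0, h1] at h01
  exacts [absurd h01 (lt_irrefl a), ⟨h0, h1⟩, absurd h01 hab.asymm, absurd h01 (lt_irrefl b)]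

theorem IsFractal.period_two_eq {μ : ℕ → ℝ} (hμ : IsFractal μ) {c : ℝ} (hc : 0 < c)
    (h₁ : period μ 1 = {1, 1 + c}) :
    period μ 2 = {2, 2 + c ^ 2, 2 + c, 2 + c + c * (1 - c)} := by
  obtain ⟨l, τ, -, -, hτl, hmono, hper, hfrac⟩ := hμ
  have himage : τ 1 '' Iio (l 1) = {0, c} := by
    have h := (hper 1).symm.trans h₁
    ext t
    simpa [eq_comm (a := t)] using Set.ext_iff.1 h (1 + t)
  obtain ⟨hl, hτ0, hτ1⟩ :=
    eq_pair_of_strictMonoOn_image_eq (fun r _ s hs hrs ↦ hmono 1 r s hrs hs.le) himage hc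
  have hτ2 : τ 1 2 = 1 := hl ▸ hτl 1
  rw [hfrac 1, hl]
  ext x
  simp only [mem_ofPred_eq, Nat.exists_lt_succ_left (n := 1), Nat.lt_one_iff, exists_eq_left]
  norm_num [hτ0, hτ1, hτ2, sq, or_assoc]

/-- the mold `L` with `λ_i = log₂ (i+1)` is not fractal; in particular the
fractality condition fails already between the second and third periods:
`(λ₂ - λ₁)/(λ₃ - λ₁) ≠ (λ₄ - λ₃)/(λ₅ - λ₃)`, i.e. `(log₂ (3/2))² ≠ log₂ (5/4)`. -/
theorem Lseq_not_fractal :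
    ¬ IsFractal Lseq ∧
    (Lseq 2 - Lseq 1) / (Lseq 3 - Lseq 1) ≠ (Lseq 4 - Lseq 3) / (Lseq 5 - Lseq 3) ∧
    (Real.logb 2 (3 / 2)) ^ 2 ≠ Real.logb 2 (5 / 4) := by
  set c := logb 2 (3 / 2)
  set d := logb 2 (5 / 4)
  have hc : 0 < c := logb_pos one_lt_two (by norm_num)
  have hc₁ : c < 1 := by
    simpa [logb_self_eq_one] using
      logb_lt_logb one_lt_two (by norm_num) (by norm_num : (3 / 2 : ℝ) < 2)
  have hd : 0 < d := logb_pos one_lt_two (by norm_num)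
  have hdc : d < c ^ 2 := logb_five_fourths_lt_sq
  obtain ⟨h1, h2, h3, h4, h5⟩ :
      Lseq 1 = 1 ∧ Lseq 2 = 1 + c ∧ Lseq 3 = 2 ∧ Lseq 4 = 2 + d ∧ Lseq 5 = 2 + c := by
    norm_num [Lseq_eq_add_logb 1 1, Lseq_eq_add_logb 1 2, Lseq_eq_add_logb 2 3,
      Lseq_eq_add_logb 2 4, Lseq_eq_add_logb 2 5, c, d]
  refine ⟨fun hfrac ↦ ?_, ?_, hdc.ne'⟩
  · have hmem : 2 + d ∈ period Lseq 2 := h4 ▸ (Lseq_mem_period_iff 4 2).2 (by norm_num)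
    rw [hfrac.period_two_eq hc Lseq_period_one] at hmem
    simp only [mem_insert_iff, mem_singleton_iff] at hmem
    rcases hmem with h | h | h | h <;> nlinarith
  · rw [h1, h2, h3, h4, h5, show (1 + c - 1) / (2 - 1) = c by ring,
      show (2 + d - 2) / (2 + c - 2) = d / c by ring, ne_eq, eq_div_iff hc.ne']
    nlinarith
end

section
/- If a normalized ℝ-mold M = (μ_i) is fractal with first period {1, 1+p} (where 0 < p < 1), then: (i) for every ℓ ∈ ℕ the map n ↦ f_ℓ(n) is strictly increasing on {0,…,2^ℓ−1} and the ℓ-th period of M equals {ℓ + f_ℓ(0), ℓ + f_ℓ(1), …, ℓ + f_ℓ(2^ℓ−1)}; and (ii) for every i ∈ ℕ, μ_i = ⌊log₂(i+1)⌋ + f_{⌊log₂(i+1)⌋}(i + 1 − 2^{⌊log₂(i+1)⌋}). -/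
/-- The golden ratio `φ = (1 + √5) / 2`. -/
noncomputable def phi : ℝ := (1 + Real.sqrt 5) / 2

/-- Given `p ∈ (0,1)` (with `q = 1 - p`), the recursively defined division functions
`f_ℓ : {0, …, 2^ℓ - 1} → [0, 1)`:
`f₀ 0 = 0`, `f_{ℓ+1} n = p * f_ℓ n` if `n < 2^ℓ`, and `f_{ℓ+1} n = p + q * f_ℓ (n - 2^ℓ)`
otherwise. -/
noncomputable def fcut (p : ℝ) : ℕ → ℕ → ℝ
  | 0, _ => 0
  | ℓ + 1, n => if n < 2 ^ ℓ then p * fcut p ℓ n else p + (1 - p) * fcut p ℓ (n - 2 ^ ℓ)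

/-! Writing the `ℓ`-th period as `ℓ + τ^{(ℓ)}` for a strictly increasing partition `τ^{(ℓ)}` of
`[0, 1]`, the fractal condition with first period `{1, 1 + p}` says that `τ^{(ℓ+1)}` arises from
`τ^{(ℓ)}` by cutting every interval in ratio `p : 1 - p`. Strictly increasing enumerations of a
finite set are unique, so this forces `l_{ℓ+1} = 2 l_ℓ` (hence `l_0 = 1`) and determines `τ^{(ℓ)}`;
splitting on the lowest binary digit shows that `f_ℓ`, closed off by the endpoint `1`, obeys the
same recursion. Finally `μ` and the enumeration of part (ii) are strictly increasing with the same
range, the union of all periods, so they coincide. -/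

open Set

theorem eq_and_eqOn_of_image_Iio_eq {α : Type*} [LinearOrder α] {f g : ℕ → α} {a b : ℕ}
    (hf : StrictMonoOn f (Iio a)) (hg : StrictMonoOn g (Iio b)) (h : f '' Iio a = g '' Iio b) :
    a = b ∧ EqOn f g (Iio a) := by
  obtain rfl : a = b := by
    simpa [hf.injOn.ncard_image, hg.injOn.ncard_image] using congrArg ncard h
  have hrange (φ : ℕ → α) : range (fun j : Fin a => φ j) = φ '' Iio a := by
    rw [← Fin.range_val, ← range_comp]; rfl
  have hfg := (StrictMono.range_inj (f := fun j : Fin a => f j) (g := fun j : Fin a => g j)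
    (fun i j hij => hf i.2 j.2 hij) (fun i j hij => hg i.2 j.2 hij)).1 (by rw [hrange, hrange, h])
  exact ⟨rfl, fun i hi => congrFun hfg ⟨i, hi⟩⟩

theorem eq_and_eqOn_of_setOf_eq {t t' : ℕ → ℝ} {a b : ℕ} {c : ℝ}
    (ht : StrictMonoOn t (Iic a)) (ht' : StrictMonoOn t' (Iic b)) (hend : t a = t' b)
    (h : {x | ∃ r < a, x = c + t r} = {x | ∃ r < b, x = c + t' r}) :
    a = b ∧ EqOn t t' (Iic b) := by
  have himage (s : ℕ → ℝ) (n : ℕ) : {x | ∃ r < n, x = c + s r} = (c + s ·) '' Iio n := by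
    ext; simp [eq_comm]
  obtain ⟨rfl, heq⟩ := eq_and_eqOn_of_image_Iio_eq ((ht.mono Iio_subset_Iic_self).const_add c)
    ((ht'.mono Iio_subset_Iic_self).const_add c) (by rw [← himage, ← himage, h])
  refine ⟨rfl, fun r hr => ?_⟩
  rcases (mem_Iic.1 hr).lt_or_eq with hr | rfl
  · exact add_left_cancel (heq hr)
  · exact hend

/-- Cuts every interval `[t r, t (r + 1)]` in ratio `p : 1 - p`: the refinement step of a fractal
mold whose first period is `{1, 1 + p}`. -/
noncomputable def subdivide (p : ℝ) (t : ℕ → ℝ) (n : ℕ) : ℝ :=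
  if n % 2 = 0 then t (n / 2) else t (n / 2) + p * (t (n / 2 + 1) - t (n / 2))

section Subdivide

variable {p : ℝ} {t t' : ℕ → ℝ}

@[simp]
theorem subdivide_two_mul (r : ℕ) : subdivide p t (2 * r) = t r := by
  simp [subdivide]

@[simp]
theorem subdivide_two_mul_add_one (r : ℕ) :
    subdivide p t (2 * r + 1) = t r + p * (t (r + 1) - t r) := by
  simp [subdivide, Nat.add_mod, show (2 * r + 1) / 2 = r by omega]

theorem subdivide_eqOn {l : ℕ} (h : EqOn t t' (Iic l)) :
    EqOn (subdivide p t) (subdivide p t') (Iic (2 * l)) := by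
  intro n hn
  obtain ⟨r, rfl | rfl⟩ := Nat.even_or_odd' n <;> simp only [mem_Iic] at hn
  · simp [h (show r ≤ l by omega)]
  · simp [h (show r ≤ l by omega), h (show r + 1 ≤ l by omega)]

theorem subdivide_strictMonoOn (hp0 : 0 < p) (hp1 : p < 1) {l : ℕ} (ht : StrictMonoOn t (Iic l)) :
    StrictMonoOn (subdivide p t) (Iic (2 * l)) := by
  refine strictMonoOn_Iic_of_lt_succ fun n hn => ?_
  rw [Order.succ_eq_add_one]
  obtain ⟨r, rfl | rfl⟩ := Nat.even_or_odd' n <;>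
    have := ht (by omega : r ≤ l) (by omega : r + 1 ≤ l) (lt_add_one r)
  · simp only [subdivide_two_mul, subdivide_two_mul_add_one]
    nlinarith
  · rw [show 2 * r + 1 + 1 = 2 * (r + 1) by ring]
    simp only [subdivide_two_mul, subdivide_two_mul_add_one]
    nlinarith

theorem setOf_subdivide {σ : ℕ → ℝ} (hσ0 : σ 0 = 0) (hσ1 : σ 1 = p) (c : ℝ) (l : ℕ) :
    {x | ∃ r < l, ∃ s < 2, x = c + t r + σ s * (t (r + 1) - t r)} =
      {x | ∃ n < 2 * l, x = c + subdivide p t n} := by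
  ext x
  simp only [mem_ofPred_eq]
  constructor
  · rintro ⟨r, hr, s, hs, rfl⟩
    interval_cases s
    · exact ⟨2 * r, by omega, by simp [hσ0]⟩
    · exact ⟨2 * r + 1, by omega, by simp [hσ1]; ring⟩
  · rintro ⟨n, hn, rfl⟩
    obtain ⟨r, rfl | rfl⟩ := Nat.even_or_odd' n
    · exact ⟨r, by omega, 0, by omega, by simp [hσ0]⟩
    · exact ⟨r, by omega, 1, by omega, by simp [hσ1]; ring⟩

end Subdivide

/-- `fcut p ℓ` together with the right endpoint `1` at `n = 2 ^ ℓ`: the partition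
`τ^{(ℓ)}_0 < ⋯ < τ^{(ℓ)}_{2^ℓ} = 1` of `[0, 1]`. -/
noncomputable def fcutExt (p : ℝ) (ℓ n : ℕ) : ℝ := if n < 2 ^ ℓ then fcut p ℓ n else 1

section FcutExt

variable {p : ℝ}

@[simp]
theorem fcut_apply_zero : ∀ ℓ, fcut p ℓ 0 = 0
  | 0 => rfl
  | ℓ + 1 => by simp [fcut, fcut_apply_zero ℓ]

theorem fcutExt_of_lt {ℓ n : ℕ} (h : n < 2 ^ ℓ) : fcutExt p ℓ n = fcut p ℓ n := if_pos h

@[simp]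
theorem fcutExt_two_pow (ℓ : ℕ) : fcutExt p ℓ (2 ^ ℓ) = 1 := if_neg (lt_irrefl _)

@[simp]
theorem fcutExt_zero (ℓ : ℕ) : fcutExt p ℓ 0 = 0 := by
  rw [fcutExt_of_lt (Nat.two_pow_pos ℓ), fcut_apply_zero]

theorem fcutExt_one_one : fcutExt p 1 1 = p := by
  simp [fcutExt, fcut]

theorem setOf_fcutExt_one (c : ℝ) : {x | ∃ r < 2, x = c + fcutExt p 1 r} = {c, c + p} := by
  ext x
  simp only [mem_insert_iff, mem_singleton_iff, mem_ofPred_eq]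
  constructor
  · rintro ⟨r, hr, rfl⟩
    interval_cases r <;> simp [fcutExt_one_one]
  · rintro (rfl | rfl)
    · exact ⟨0, two_pos, by simp⟩
    · exact ⟨1, one_lt_two, by rw [fcutExt_one_one]⟩

theorem fcutExt_succ_of_le {ℓ n : ℕ} (h : n ≤ 2 ^ ℓ) :
    fcutExt p (ℓ + 1) n = p * fcutExt p ℓ n := by
  have hlt : n < 2 ^ (ℓ + 1) := by have := Nat.two_pow_pos ℓ; rw [pow_succ]; omega
  rcases h.lt_or_eq with h | rfl
  · rw [fcutExt_of_lt hlt, fcutExt_of_lt h, fcut, if_pos h]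
  · rw [fcutExt_of_lt hlt, fcutExt_two_pow, fcut, if_neg (lt_irrefl _), Nat.sub_self,
      fcut_apply_zero]
    ring

theorem fcutExt_succ_two_pow_add {ℓ n : ℕ} (h : n ≤ 2 ^ ℓ) :
    fcutExt p (ℓ + 1) (2 ^ ℓ + n) = p + (1 - p) * fcutExt p ℓ n := by
  rcases h.lt_or_eq with h | rfl
  · rw [fcutExt_of_lt (by rw [pow_succ]; omega), fcutExt_of_lt h, fcut, if_neg (by omega),
      Nat.add_sub_cancel_left]
  · rw [← two_mul, ← pow_succ', fcutExt_two_pow, fcutExt_two_pow]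
    ring

theorem fcutExt_succ_two_mul : ∀ {ℓ r : ℕ}, r ≤ 2 ^ ℓ → fcutExt p (ℓ + 1) (2 * r) = fcutExt p ℓ r
  | 0, r, hr => by interval_cases r <;> simp [fcutExt]
  | ℓ + 1, r, hr => by
    rcases le_or_gt r (2 ^ ℓ) with h | h
    · rw [fcutExt_succ_of_le (by rw [pow_succ]; omega), fcutExt_succ_two_mul h,
        fcutExt_succ_of_le h]
    · obtain ⟨m, rfl⟩ := Nat.exists_eq_add_of_lt h
      have hm : m + 1 ≤ 2 ^ ℓ := by rw [pow_succ] at hr; omega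
      rw [show 2 * (2 ^ ℓ + m + 1) = 2 ^ (ℓ + 1) + 2 * (m + 1) by ring,
        fcutExt_succ_two_pow_add (by rw [pow_succ]; omega), fcutExt_succ_two_mul hm, add_assoc,
        fcutExt_succ_two_pow_add hm]

theorem fcutExt_succ_two_mul_add_one : ∀ {ℓ r : ℕ}, r < 2 ^ ℓ →
    fcutExt p (ℓ + 1) (2 * r + 1) = fcutExt p ℓ r + p * (fcutExt p ℓ (r + 1) - fcutExt p ℓ r)
  | 0, r, hr => by interval_cases r; simp [fcutExt, fcut]
  | ℓ + 1, r, hr => by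
    rcases lt_or_ge r (2 ^ ℓ) with h | h
    · rw [fcutExt_succ_of_le (by rw [pow_succ]; omega), fcutExt_succ_two_mul_add_one h,
        fcutExt_succ_of_le h.le, fcutExt_succ_of_le h]
      ring
    · obtain ⟨m, rfl⟩ := Nat.exists_eq_add_of_le h
      have hm : m < 2 ^ ℓ := by rw [pow_succ] at hr; omega
      rw [show 2 * (2 ^ ℓ + m) + 1 = 2 ^ (ℓ + 1) + (2 * m + 1) by ring,
        fcutExt_succ_two_pow_add (by rw [pow_succ]; omega), fcutExt_succ_two_mul_add_one hm,
        add_assoc, fcutExt_succ_two_pow_add hm, fcutExt_succ_two_pow_add hm.le]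
      ring

theorem fcutExt_succ_eqOn (ℓ : ℕ) :
    EqOn (fcutExt p (ℓ + 1)) (subdivide p (fcutExt p ℓ)) (Iic (2 * 2 ^ ℓ)) := by
  intro n hn
  obtain ⟨r, rfl | rfl⟩ := Nat.even_or_odd' n <;> simp only [mem_Iic] at hn
  · rw [subdivide_two_mul, fcutExt_succ_two_mul (by omega)]
  · rw [subdivide_two_mul_add_one, fcutExt_succ_two_mul_add_one (by omega)]

theorem fcutExt_strictMonoOn (hp0 : 0 < p) (hp1 : p < 1) :
    ∀ ℓ, StrictMonoOn (fcutExt p ℓ) (Iic (2 ^ ℓ))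
  | 0 => strictMonoOn_Iic_of_lt_succ fun n hn => by
    obtain rfl : n = 0 := by simpa using hn
    simp [fcutExt]
  | ℓ + 1 => by
    rw [pow_succ']
    exact (subdivide_strictMonoOn hp0 hp1 (fcutExt_strictMonoOn hp0 hp1 ℓ)).congr
      (fcutExt_succ_eqOn ℓ).symm

theorem fcut_strictMonoOn (hp0 : 0 < p) (hp1 : p < 1) (ℓ : ℕ) :
    StrictMonoOn (fcut p ℓ) (Iio (2 ^ ℓ)) :=
  ((fcutExt_strictMonoOn hp0 hp1 ℓ).mono Iio_subset_Iic_self).congr fun _ hn => fcutExt_of_lt hn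

theorem fcut_mem_Ico (hp0 : 0 < p) (hp1 : p < 1) {ℓ n : ℕ} (hn : n < 2 ^ ℓ) :
    fcut p ℓ n ∈ Ico 0 1 := by
  have hmono := fcutExt_strictMonoOn hp0 hp1 ℓ
  rw [← fcutExt_of_lt hn, ← fcutExt_zero ℓ, ← fcutExt_two_pow ℓ]
  exact ⟨hmono.monotoneOn (Nat.zero_le _) hn.le (Nat.zero_le _), hmono hn.le (le_refl (2 ^ ℓ)) hn⟩

end FcutExt

theorem Nat.exists_eq_two_pow_add {m : ℕ} (hm : m ≠ 0) : ∃ ℓ n, n < 2 ^ ℓ ∧ m = 2 ^ ℓ + n := by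
  have hlo := Nat.pow_log_le_self 2 hm
  have hhi := Nat.lt_pow_succ_log_self Nat.one_lt_two m
  rw [pow_succ] at hhi
  exact ⟨Nat.log 2 m, m - 2 ^ Nat.log 2 m, by omega, by omega⟩

noncomputable def fcutEnum (p : ℝ) (j : ℕ) : ℝ :=
  (Nat.log 2 (j + 1) : ℝ) + fcut p (Nat.log 2 (j + 1)) (j + 1 - 2 ^ Nat.log 2 (j + 1))

section FcutEnum

variable {p : ℝ}

theorem fcutEnum_eq {ℓ n j : ℕ} (hn : n < 2 ^ ℓ) (hj : j + 1 = 2 ^ ℓ + n) :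
    fcutEnum p j = ℓ + fcut p ℓ n := by
  have hlog : Nat.log 2 (j + 1) = ℓ :=
    Nat.log_eq_of_pow_le_of_lt_pow (by omega) (by rw [pow_succ]; omega)
  rw [fcutEnum, hlog, hj, Nat.add_sub_cancel_left]

theorem range_fcutEnum :
    range (fcutEnum p) = ⋃ ℓ : ℕ, {x | ∃ n < 2 ^ ℓ, x = ℓ + fcut p ℓ n} := by
  ext x
  simp only [mem_range, mem_iUnion, mem_ofPred_eq]
  constructor
  · rintro ⟨j, rfl⟩
    obtain ⟨ℓ, n, hn, hj⟩ := Nat.exists_eq_two_pow_add j.succ_ne_zero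
    exact ⟨ℓ, n, hn, fcutEnum_eq hn hj⟩
  · rintro ⟨ℓ, n, hn, rfl⟩
    exact ⟨2 ^ ℓ + n - 1, fcutEnum_eq hn (by have := Nat.two_pow_pos ℓ; omega)⟩

theorem fcutEnum_strictMono (hp0 : 0 < p) (hp1 : p < 1) : StrictMono (fcutEnum p) := by
  intro j k hjk
  obtain ⟨L, n, hn, hj⟩ := Nat.exists_eq_two_pow_add j.succ_ne_zero
  obtain ⟨M, m, hm, hk⟩ := Nat.exists_eq_two_pow_add k.succ_ne_zero
  rw [fcutEnum_eq hn hj, fcutEnum_eq hm hk]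
  have hLM : L ≤ M :=
    Nat.lt_succ_iff.1 ((Nat.pow_lt_pow_iff_right Nat.one_lt_two).1 (by rw [pow_succ]; omega))
  rcases hLM.lt_or_eq with hLM | rfl
  · have hL : (L : ℝ) + 1 ≤ M := by exact_mod_cast hLM
    linarith [(fcut_mem_Ico hp0 hp1 hn).2, (fcut_mem_Ico hp0 hp1 hm).1]
  · exact add_lt_add_right (fcut_strictMonoOn hp0 hp1 L hn hm (by omega)) _

end FcutEnum

theorem range_eq_iUnion_period {μ : ℕ → ℝ} (h0 : ∀ i, 0 ≤ μ i) :
    range μ = ⋃ ℓ : ℕ, period μ ℓ := by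
  ext x
  simp only [mem_range, mem_iUnion, period, mem_ofPred_eq]
  constructor
  · rintro ⟨k, rfl⟩
    exact ⟨⌊μ k⌋₊, ⟨k, rfl⟩, Nat.floor_le (h0 k), Nat.lt_floor_add_one _⟩
  · rintro ⟨-, hx, -⟩
    exact hx

theorem IsFractal.period_eq_fcut {μ : ℕ → ℝ} {p : ℝ} (hp0 : 0 < p) (hp1 : p < 1)
    (hfr : IsFractal μ) (hper : period μ 1 = {1, 1 + p}) (ℓ : ℕ) :
    period μ ℓ = {x | ∃ n < 2 ^ ℓ, x = ℓ + fcut p ℓ n} := by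
  obtain ⟨l, τ, -, hτ0, hτl, hτmono, hpd, hfrac⟩ := hfr
  have hmono (i : ℕ) : StrictMonoOn (τ i) (Iic (l i)) := fun r hr s hs hrs => hτmono i r s hrs hs
  obtain ⟨hl1, hτ1⟩ : l 1 = 2 ∧ EqOn (τ 1) (fcutExt p 1) (Iic 2) := by
    refine eq_and_eqOn_of_setOf_eq (c := 1) (hmono 1) (fcutExt_strictMonoOn hp0 hp1 1)
      (by rw [hτl]; exact (fcutExt_two_pow 1).symm) ?_
    rw [setOf_fcutExt_one, ← hper, hpd 1, Nat.cast_one]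
  have hτ11 : τ 1 1 = p := by rw [hτ1 (by norm_num : 1 ≤ 2), fcutExt_one_one]
  have hstep (i : ℕ) :
      l (i + 1) = 2 * l i ∧ EqOn (τ (i + 1)) (subdivide p (τ i)) (Iic (2 * l i)) := by
    refine eq_and_eqOn_of_setOf_eq (c := i + 1) (hmono _)
      (subdivide_strictMonoOn hp0 hp1 (hmono i)) (by rw [hτl, subdivide_two_mul, hτl]) ?_
    have := hpd (i + 1)
    rw [hfrac i, hl1, setOf_subdivide (hτ0 1) hτ11, Nat.cast_succ] at this
    exact this.symm
  have hτfcut (ℓ : ℕ) : l ℓ = 2 ^ ℓ ∧ EqOn (τ ℓ) (fcutExt p ℓ) (Iic (2 ^ ℓ)) := by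
    induction ℓ with
    | zero =>
      have hl0 : l 0 = 1 := by have : l 1 = 2 * l 0 := (hstep 0).1; omega
      refine ⟨hl0, fun r hr => ?_⟩
      obtain rfl | rfl : r = 0 ∨ r = 1 := by simp at hr; omega
      · simp [hτ0]
      · show τ 0 1 = fcutExt p 0 (2 ^ 0)
        rw [fcutExt_two_pow, ← hl0, hτl]
    | succ ℓ ih =>
      obtain ⟨hl', hτ'⟩ := hstep ℓ
      rw [ih.1] at hl' hτ'
      rw [pow_succ']
      exact ⟨hl', hτ'.trans ((subdivide_eqOn ih.2).trans (fcutExt_succ_eqOn ℓ).symm)⟩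
  obtain ⟨hl, hτ⟩ := hτfcut ℓ
  rw [hpd ℓ, hl]
  ext x
  exact exists_congr fun n => and_congr_right fun hn => by rw [hτ hn.le, fcutExt_of_lt hn]

theorem fractal_mold_structure_general (μ : ℕ → ℝ) (p : ℝ) (hp0 : 0 < p) (hp1 : p < 1)
    (hmold : IsRMold μ) (hfr : IsFractal μ)
    (hper : period μ 1 = {1, 1 + p}) :
    (∀ ℓ : ℕ,
      (∀ m n : ℕ, m < n → n < 2 ^ ℓ → fcut p ℓ m < fcut p ℓ n) ∧
      period μ ℓ = {x : ℝ | ∃ n : ℕ, n < 2 ^ ℓ ∧ x = (ℓ : ℝ) + fcut p ℓ n}) ∧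
    (∀ i : ℕ, μ i = (Nat.log 2 (i + 1) : ℝ) +
      fcut p (Nat.log 2 (i + 1)) (i + 1 - 2 ^ Nat.log 2 (i + 1))) := by
  obtain ⟨hμmono, hμnonneg, -⟩ := hmold
  have hperiod := hfr.period_eq_fcut hp0 hp1 hper
  refine ⟨fun ℓ => ⟨fun m n hmn hn => fcut_strictMonoOn hp0 hp1 ℓ (hmn.trans hn) hn hmn,
    hperiod ℓ⟩, fun i => ?_⟩
  have hrange : range μ = range (fcutEnum p) := by
    rw [range_eq_iUnion_period hμnonneg, range_fcutEnum]
    exact iUnion_congr hperiod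
  exact congrFun ((hμmono.range_inj (fcutEnum_strictMono hp0 hp1)).1 hrange) i

/-- structure of fractal molds of granularity 2 with first period `{1, 1+p}`:
(i) each `f_ℓ` is strictly increasing on `{0, …, 2^ℓ - 1}` and the `ℓ`-th period of `M` is
`{ℓ + f_ℓ 0, …, ℓ + f_ℓ (2^ℓ - 1)}`; (ii) `μ_i = ⌊log₂ (i+1)⌋ + f_{⌊log₂ (i+1)⌋}(i+1-2^{⌊log₂ (i+1)⌋})`. -/
theorem fractal_mold_structure (μ : ℕ → ℝ) (p : ℝ) (hp0 : 0 < p) (hp1 : p < 1)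
    (hmold : IsRMold μ) (hnorm : μ 1 = 1) (hfr : IsFractal μ)
    (hper : period μ 1 = {1, 1 + p}) :
    (∀ ℓ : ℕ,
      (∀ m n : ℕ, m < n → n < 2 ^ ℓ → fcut p ℓ m < fcut p ℓ n) ∧
      period μ ℓ = {x : ℝ | ∃ n : ℕ, n < 2 ^ ℓ ∧ x = (ℓ : ℝ) + fcut p ℓ n}) ∧
    (∀ i : ℕ, μ i = (Nat.log 2 (i + 1) : ℝ) +
      fcut p (Nat.log 2 (i + 1)) (i + 1 - 2 ^ Nat.log 2 (i + 1))) :=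
  fractal_mold_structure_general μ p hp0 hp1 hmold hfr hper
end
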